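/- Let β be a nonzero cardinal with β ≤ α and let G be one of the Grassmannians G_β(V) or G^β(V). If two bases B and B' of V define the same apartment of G, then every vector of B' is a nonzero scalar multiple of a vector of B (and conversely every vector of B is a nonzero scalar multiple of a vector of B'). -/

import Mathlib

/- Setting: `V` is a left vector space over a division ring `K` whose dimension
`α = Module.rank K V` is an infinite cardinal. -/

universe u v w

section Defs

variable (K : Type u) (V : Type v) [DivisionRing K] [AddCommGroup V] [Module K V]

/-- `B ⊆ V` is a basis of `V`, given as a set of vectors. -/
def IsBasisSet (B : Set V) : Prop :=
  LinearIndependent K ((↑) : B → V) ∧ Submodule.span K B = ⊤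

/-- The Grassmannian `G_β(V)`: all subspaces of dimension `β` and codimension `α`. -/
def Gsub (β : Cardinal.{v}) : Set (Submodule K V) :=
  {X | Module.rank K ↥X = β ∧ Module.rank K (V ⧸ X) = Module.rank K V}

/-- The Grassmannian `G^β(V)`: all subspaces of dimension `α` and codimension `β`. -/
def Gsup (β : Cardinal.{v}) : Set (Submodule K V) :=
  {X | Module.rank K ↥X = Module.rank K V ∧ Module.rank K (V ⧸ X) = β}

/-- The apartment of a Grassmannian `G` defined by a basis `B`:
all elements of `G` spanned by subsets of `B`. -/
def apartmentOf (G : Set (Submodule K V)) (B : Set V) : Set (Submodule K V) :=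
  {X | X ∈ G ∧ ∃ S ⊆ B, X = Submodule.span K S}

end Defs

variable {K : Type u} {V : Type v} [DivisionRing K] [AddCommGroup V] [Module K V]

/-!
For subsets `S, T` of a basis, `span (S ∩ T) = span S ⊓ span T`, and a basis vector lies in
`span S` only if it lies in `S`.

For `G_β(V)`: given `v ∈ B'`, pick two elements of the apartment spanned by subsets of `B'` that
meet exactly in `v`. Their intersection `K v` is then also spanned by a subset of `B`, which must
be a single vector of `B`.

For `G^β(V)`: if the coordinates of `v ∈ B'` with respect to `B` involved two vectors
`w₁ ≠ w₂`, remove from `B` disjoint sets `T₁ ∋ w₁`, `T₂ ∋ w₂`. The spans of `B \ Tᵢ` lie in the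
apartment, do not contain `v`, and together span `V`. Spanned by subsets of `B'`, one of them
would have to contain the vector `v` of `B'`.
-/

open Cardinal Set Submodule

namespace Cardinal

theorem exists_le_add_one_eq {β : Cardinal} (hβ0 : β ≠ 0) : ∃ γ ≤ β, γ + 1 = β := by
  rcases le_or_gt ℵ₀ β with hβ | hβ
  · exact ⟨β, le_rfl, add_one_eq hβ⟩
  · obtain ⟨n, rfl⟩ := lt_aleph0.1 hβ
    obtain ⟨m, rfl⟩ := Nat.exists_eq_succ_of_ne_zero (by exact_mod_cast hβ0)
    exact ⟨m, by exact_mod_cast m.le_succ, by norm_cast⟩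

theorem mk_sdiff_eq_of_lt {α : Type*} {s t : Set α} (hs : ℵ₀ ≤ #s) (ht : #t < #s) :
    #(s \ t : Set α) = #s := by
  refine le_antisymm (mk_le_mk_of_subset sdiff_subset) (not_lt.1 fun h => ?_)
  exact (le_mk_sdiff_add_mk s t).not_gt (add_lt_of_lt hs h ht)

theorem exists_disjoint_subsets_mk_eq {α : Type*} {A : Set α} (hA : ℵ₀ ≤ #A) :
    ∃ C₁ ⊆ A, ∃ C₂ ⊆ A, Disjoint C₁ C₂ ∧ #C₁ = #A ∧ #C₂ = #A := by
  obtain ⟨g⟩ : #(A ⊕ A) ≤ #A := by rw [mk_sum, lift_id, add_eq_self hA]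
  have hmk {f : A → A ⊕ A} (hf : f.Injective) : #(((↑) : A → α) '' range (g ∘ f)) = #A := by
    rw [mk_image_eq Subtype.val_injective, mk_range_eq _ (g.injective.comp hf)]
  refine ⟨_, Subtype.coe_image_subset A _, _, Subtype.coe_image_subset A _, ?_,
    hmk Sum.inl_injective, hmk Sum.inr_injective⟩
  rw [Set.disjoint_left]
  rintro _ ⟨_, ⟨a, rfl⟩, rfl⟩ ⟨_, ⟨b, hb⟩, hab⟩
  exact Sum.inr_ne_inl (g.injective (Subtype.val_injective (hb ▸ hab)))

theorem exists_subset_mk_insert_eq {α : Type*} {a : α} {C : Set α} (ha : a ∉ C) {β : Cardinal}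
    (hβ0 : β ≠ 0) (hβ : β ≤ #C) : ∃ E ⊆ C, #(insert a E : Set α) = β := by
  obtain ⟨γ, hγβ, hγ⟩ := exists_le_add_one_eq hβ0
  obtain ⟨E, hEC, hE⟩ := le_mk_iff_exists_subset.1 (hγβ.trans hβ)
  exact ⟨E, hEC, by rw [mk_insert fun h => ha (hEC h), hE, hγ]⟩

/-- `T₁ ∩ T₂ ⊆ {a₁} ∩ {a₂}`: the two sets are disjoint if `a₁ ≠ a₂`, and meet exactly in `a₁`
if `a₁ = a₂`. -/
theorem exists_subsets_mk_eq_inter_subset {α : Type*} {A : Set α} (hA : ℵ₀ ≤ #A) {a₁ a₂ : α}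
    (h₁ : a₁ ∈ A) (h₂ : a₂ ∈ A) {β : Cardinal} (hβ0 : β ≠ 0) (hβ : β ≤ #A) :
    ∃ T₁ T₂ : Set α, T₁ ⊆ A ∧ T₂ ⊆ A ∧ a₁ ∈ T₁ ∧ a₂ ∈ T₂ ∧ #T₁ = β ∧ #T₂ = β ∧
      #(A \ T₁ : Set α) = #A ∧ #(A \ T₂ : Set α) = #A ∧ T₁ ∩ T₂ ⊆ {a₁} ∩ {a₂} := by
  have hA' : #(A \ {a₁, a₂} : Set α) = #A :=
    mk_sdiff_eq_of_lt hA (((finite_singleton a₂).insert a₁).lt_aleph0.trans_le hA)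
  obtain ⟨C₁, hC₁, C₂, hC₂, hC, hC₁A, hC₂A⟩ := exists_disjoint_subsets_mk_eq (hA'.symm ▸ hA)
  rw [hA'] at hC₁A hC₂A
  obtain ⟨E₁, hE₁, hE₁β⟩ :=
    exists_subset_mk_insert_eq (fun h => (hC₁ h).2 (mem_insert a₁ _)) hβ0 (hC₁A ▸ hβ)
  obtain ⟨E₂, hE₂, hE₂β⟩ :=
    exists_subset_mk_insert_eq (fun h => (hC₂ h).2 (mem_insert_of_mem a₁ rfl)) hβ0 (hC₂A ▸ hβ)
  have hcompl {a : α} {E C C' : Set α} (hE : E ⊆ C) (hCC' : Disjoint C C')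
      (hC' : C' ⊆ A \ {a₁, a₂}) (ha : a ∈ ({a₁, a₂} : Set α)) (hC'A : #C' = #A) :
      #(A \ insert a E : Set α) = #A := by
    refine le_antisymm (mk_le_mk_of_subset sdiff_subset) (hC'A ▸ mk_le_mk_of_subset ?_)
    rintro x hx
    refine ⟨(hC' hx).1, ?_⟩
    rintro (rfl | hxE)
    exacts [(hC' hx).2 ha, Set.disjoint_left.1 hCC' (hE hxE) hx]
  refine ⟨insert a₁ E₁, insert a₂ E₂, insert_subset h₁ (hE₁.trans (hC₁.trans sdiff_subset)),
    insert_subset h₂ (hE₂.trans (hC₂.trans sdiff_subset)), mem_insert a₁ E₁, mem_insert a₂ E₂,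
    hE₁β, hE₂β, hcompl hE₁ hC hC₂ (mem_insert a₁ _) hC₂A,
    hcompl hE₂ hC.symm hC₁ (mem_insert_of_mem a₁ rfl) hC₁A, ?_⟩
  rintro x ⟨rfl | hx₁, rfl | hx₂⟩
  · exact ⟨rfl, rfl⟩
  · exact absurd (hC₂ (hE₂ hx₂)).2 (by simp)
  · exact absurd (hC₁ (hE₁ hx₁)).2 (by simp)
  · exact absurd (hE₂ hx₂) (Set.disjoint_left.1 hC (hE₁ hx₁))

end Cardinal

namespace IsBasisSet

variable {B S T : Set V} (hB : IsBasisSet K V B)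
include hB

theorem linearIndepOn : LinearIndepOn K id B := hB.1

theorem ne_zero {v : V} (hv : v ∈ B) : v ≠ 0 := hB.1.ne_zero ⟨v, hv⟩

noncomputable def basis : Module.Basis B K V :=
  .mk hB.1 (by rw [Subtype.range_coe]; exact hB.2.ge)

theorem coe_basis : ⇑hB.basis = Subtype.val := Module.Basis.coe_mk _ _

theorem mk_eq_rank : #B = Module.rank K V := hB.basis.mk_eq_rank''

def support (x : V) : Set V := Subtype.val '' ((hB.basis.repr x).support : Set B)

theorem support_subset (x : V) : hB.support x ⊆ B := Subtype.coe_image_subset B _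

theorem support_nonempty {x : V} (hx : x ≠ 0) : (hB.support x).Nonempty := by
  refine Set.Nonempty.image _ (Finsupp.support_nonempty_iff.2 fun h => hx ?_)
  simpa using congrArg hB.basis.repr.symm h

theorem mem_span_iff_support_subset (hS : S ⊆ B) (x : V) :
    x ∈ span K S ↔ hB.support x ⊆ S := by
  rw [support, image_subset_iff, ← hB.basis.mem_span_image, coe_basis,
    Subtype.image_preimage_coe, inter_eq_right.2 hS]

theorem mem_span_iff_mem (hS : S ⊆ B) {b : V} (hb : b ∈ B) : b ∈ span K S ↔ b ∈ S :=
  ⟨fun h => (hB.linearIndepOn.mono hS).mem_span_iff_id.1 h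
    (hB.linearIndepOn.mono (insert_subset hb hS)), fun h => subset_span h⟩

theorem span_inter (hS : S ⊆ B) (hT : T ⊆ B) : span K (S ∩ T) = span K S ⊓ span K T := by
  ext x
  simp only [mem_inf, hB.mem_span_iff_support_subset hS, hB.mem_span_iff_support_subset hT,
    hB.mem_span_iff_support_subset (inter_subset_left.trans hS), subset_inter_iff]

theorem rank_span (hS : S ⊆ B) : Module.rank K (span K S) = #S :=
  rank_span_set (hB.linearIndepOn.mono hS)

theorem isCompl_span_sdiff (hS : S ⊆ B) : IsCompl (span K S) (span K (B \ S)) := by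
  refine ⟨disjoint_iff.2 ?_, codisjoint_iff.2 ?_⟩
  · rw [← hB.span_inter hS sdiff_subset, inter_sdiff_self, span_empty]
  · rw [← span_union, union_sdiff_cancel hS, hB.2]

theorem rank_quotient_span (hS : S ⊆ B) : Module.rank K (V ⧸ span K S) = #(B \ S : Set V) := by
  rw [(quotientEquivOfIsCompl _ _ (hB.isCompl_span_sdiff hS)).rank_eq,
    hB.rank_span sdiff_subset]

theorem span_mem_apartmentOf_Gsub {β : Cardinal} (hS : S ⊆ B) (hSβ : #S = β)
    (hBS : #(B \ S : Set V) = #B) : span K S ∈ apartmentOf K V (Gsub K V β) B :=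
  ⟨⟨(hB.rank_span hS).trans hSβ, by rw [hB.rank_quotient_span hS, hBS, hB.mk_eq_rank]⟩,
    S, hS, rfl⟩

theorem span_sdiff_mem_apartmentOf_Gsup {β : Cardinal} (hT : T ⊆ B) (hTβ : #T = β)
    (hBT : #(B \ T : Set V) = #B) : span K (B \ T) ∈ apartmentOf K V (Gsup K V β) B :=
  ⟨⟨by rw [hB.rank_span sdiff_subset, hBT, hB.mk_eq_rank], by
    rw [hB.rank_quotient_span sdiff_subset, sdiff_sdiff_cancel_left hT, hTβ]⟩,
    B \ T, sdiff_subset, rfl⟩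

theorem exists_mem_span_singleton_of_span_eq (hT : T ⊆ B) {v : V} (hv : v ≠ 0)
    (h : span K T = span K {v}) : ∃ w ∈ B, v ∈ span K {w} := by
  have hT1 : #T = 1 := by
    rw [← hB.rank_span hT, h, rank_span_set (LinearIndepOn.singleton (v := id) hv), mk_singleton]
  obtain ⟨w, rfl⟩ := mk_set_eq_one_iff.1 hT1
  exact ⟨w, hT rfl, h ▸ mem_span_singleton_self v⟩

theorem mem_or_mem_of_sup_eq_top {S₁ S₂ : Set V} (hS₁ : S₁ ⊆ B) (hS₂ : S₂ ⊆ B)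
    (h : span K S₁ ⊔ span K S₂ = ⊤) {b : V} (hb : b ∈ B) : b ∈ span K S₁ ∨ b ∈ span K S₂ := by
  have hbS : b ∈ S₁ ∪ S₂ := by
    rw [← hB.mem_span_iff_mem (union_subset hS₁ hS₂) hb, span_union, h]
    exact mem_top
  exact hbS.imp (fun h => subset_span h) fun h => subset_span h

end IsBasisSet

section SameApartment

variable {B B' : Set V} {β : Cardinal.{v}} (hα : ℵ₀ ≤ Module.rank K V) (hβ0 : β ≠ 0)
  (hβ : β ≤ Module.rank K V) (hB : IsBasisSet K V B) (hB' : IsBasisSet K V B')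
include hα hβ0 hβ hB hB'

theorem exists_mem_span_singleton_of_apartmentOf_Gsub_eq
    (heq : apartmentOf K V (Gsub K V β) B = apartmentOf K V (Gsub K V β) B') {v : V}
    (hv : v ∈ B') : ∃ w ∈ B, v ∈ span K {w} := by
  obtain ⟨T₁, T₂, hT₁, hT₂, hvT₁, hvT₂, hT₁β, hT₂β, hT₁c, hT₂c, hT₁₂⟩ :=
    exists_subsets_mk_eq_inter_subset (hα.trans_eq hB'.mk_eq_rank.symm) hv hv hβ0
      (hβ.trans_eq hB'.mk_eq_rank.symm)
  obtain ⟨-, U₁, hU₁, hTU₁⟩ := heq ▸ hB'.span_mem_apartmentOf_Gsub hT₁ hT₁β hT₁c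
  obtain ⟨-, U₂, hU₂, hTU₂⟩ := heq ▸ hB'.span_mem_apartmentOf_Gsub hT₂ hT₂β hT₂c
  have hT : T₁ ∩ T₂ = {v} :=
    Subset.antisymm (hT₁₂.trans inter_subset_left) (singleton_subset_iff.2 ⟨hvT₁, hvT₂⟩)
  refine hB.exists_mem_span_singleton_of_span_eq (inter_subset_left.trans hU₁ : U₁ ∩ U₂ ⊆ B)
    (hB'.ne_zero hv) ?_
  rw [hB.span_inter hU₁ hU₂, ← hTU₁, ← hTU₂, ← hB'.span_inter hT₁ hT₂, hT]

theorem exists_mem_span_singleton_of_apartmentOf_Gsup_eq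
    (heq : apartmentOf K V (Gsup K V β) B = apartmentOf K V (Gsup K V β) B') {v : V}
    (hv : v ∈ B') : ∃ w ∈ B, v ∈ span K {w} := by
  have hsupp : ∀ w₁ ∈ hB.support v, ∀ w₂ ∈ hB.support v, w₁ = w₂ := by
    intro w₁ hw₁ w₂ hw₂
    by_contra hne
    obtain ⟨T₁, T₂, hT₁, hT₂, hwT₁, hwT₂, hT₁β, hT₂β, hT₁c, hT₂c, hT₁₂⟩ :=
      exists_subsets_mk_eq_inter_subset (hα.trans_eq hB.mk_eq_rank.symm)
        (hB.support_subset v hw₁) (hB.support_subset v hw₂) hβ0 (hβ.trans_eq hB.mk_eq_rank.symm)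
    have hT : T₁ ∩ T₂ = ∅ := subset_empty_iff.1 (by simpa [hne] using hT₁₂)
    obtain ⟨-, S₁, hS₁, hTS₁⟩ := heq ▸ hB.span_sdiff_mem_apartmentOf_Gsup hT₁ hT₁β hT₁c
    obtain ⟨-, S₂, hS₂, hTS₂⟩ := heq ▸ hB.span_sdiff_mem_apartmentOf_Gsup hT₂ hT₂β hT₂c
    have htop : span K S₁ ⊔ span K S₂ = ⊤ := by
      rw [← hTS₁, ← hTS₂, ← span_union, ← sdiff_inter, hT, sdiff_empty, hB.2]
    rcases hB'.mem_or_mem_of_sup_eq_top hS₁ hS₂ htop hv with h | h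
    · rw [← hTS₁, hB.mem_span_iff_support_subset sdiff_subset] at h
      exact (h hw₁).2 hwT₁
    · rw [← hTS₂, hB.mem_span_iff_support_subset sdiff_subset] at h
      exact (h hw₂).2 hwT₂
  obtain ⟨w, hw⟩ := hB.support_nonempty (hB'.ne_zero hv)
  have hwB := hB.support_subset v hw
  exact ⟨w, hwB, (hB.mem_span_iff_support_subset (singleton_subset_iff.2 hwB) v).2
    fun w' hw' => hsupp w' hw' w hw⟩

theorem exists_smul_of_apartmentOf_eq {G : Set (Submodule K V)}
    (hG : G = Gsub K V β ∨ G = Gsup K V β) (heq : apartmentOf K V G B = apartmentOf K V G B') :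
    ∀ v ∈ B', ∃ w ∈ B, ∃ c : K, c ≠ 0 ∧ v = c • w := by
  intro v hv
  obtain ⟨w, hw, hvw⟩ : ∃ w ∈ B, v ∈ span K {w} := by
    rcases hG with rfl | rfl
    exacts [exists_mem_span_singleton_of_apartmentOf_Gsub_eq hα hβ0 hβ hB hB' heq hv,
      exists_mem_span_singleton_of_apartmentOf_Gsup_eq hα hβ0 hβ hB hB' heq hv]
  obtain ⟨c, rfl⟩ := mem_span_singleton.1 hvw
  exact ⟨w, hw, c, fun hc => hB'.ne_zero hv (by rw [hc, zero_smul]), rfl⟩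

end SameApartment

/-- If two bases `B` and `B'` of `V` define the same apartment of `G`, then the vectors
of each basis are nonzero scalar multiples of the vectors of the other. -/
theorem stmt14 (hα : Cardinal.aleph0 ≤ Module.rank K V)
    (β : Cardinal.{v}) (hβ0 : β ≠ 0) (hβ : β ≤ Module.rank K V)
    (G : Set (Submodule K V)) (hG : G = Gsub K V β ∨ G = Gsup K V β)
    (B B' : Set V) (hB : IsBasisSet K V B) (hB' : IsBasisSet K V B')
    (heq : apartmentOf K V G B = apartmentOf K V G B') :
    (∀ v ∈ B', ∃ w ∈ B, ∃ c : K, c ≠ 0 ∧ v = c • w) ∧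
    (∀ w ∈ B, ∃ v ∈ B', ∃ c : K, c ≠ 0 ∧ w = c • v) :=
  ⟨exists_smul_of_apartmentOf_eq hα hβ0 hβ hB hB' hG heq,
    exists_smul_of_apartmentOf_eq hα hβ0 hβ hB' hB hG heq.symm⟩
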